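/- Let P, Q be nonzero coprime polynomials over F_q with deg P > deg Q, let v, w ∈ F_q[X], and let k ≥ 1. If there exists a digit string s_{k-1}, ..., s_0 (each s_i of degree < deg P) such that both (P/Q)^k·v + Σ_{i=0}^{k-1}(s_i/Q)(P/Q)^i and (P/Q)^k·w + Σ_{i=0}^{k-1}(s_i/Q)(P/Q)^i are polynomials, then v ≡ w mod Q^k. -/

import Mathlib

open Polynomial

/-- Clearing the denominator `Q ^ k` turns the hypothesis into `Q ^ k ∣ P ^ k * y`, and `P ^ k` is
coprime to `Q ^ k`. -/
theorem IsCoprime.pow_dvd_of_algebraMap_eq_div_pow_mul {R K : Type*} [CommRing R] [Field K]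
    [Algebra R K] [FaithfulSMul R K] {P Q x y : R} (hcop : IsCoprime P Q) (hQ : Q ≠ 0) (k : ℕ)
    (h : algebraMap R K x = (algebraMap R K P / algebraMap R K Q) ^ k * algebraMap R K y) :
    Q ^ k ∣ y := by
  have hQ' : algebraMap R K Q ≠ 0 := by
    rwa [ne_eq, map_eq_zero_iff _ (FaithfulSMul.algebraMap_injective R K)]
  have hcleared : Q ^ k * x = P ^ k * y := by
    apply FaithfulSMul.algebraMap_injective R K
    rw [map_mul, map_mul, map_pow, map_pow, h, div_pow, ← mul_assoc,
      mul_div_cancel₀ _ (pow_ne_zero k hQ')]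
  exact hcop.symm.pow.dvd_of_dvd_mul_left ⟨x, hcleared.symm⟩

theorem pq_common_continuation_congruence (Fq : Type*) [Field Fq]
    (P Q : Polynomial Fq) (hQ : Q ≠ 0) (hcop : IsCoprime P Q)
    (v w : Polynomial Fq) (k : ℕ)
    (s : ℕ → Polynomial Fq)
    (hv : ∃ a : Polynomial Fq, algebraMap (Polynomial Fq) (RatFunc Fq) a =
      ((algebraMap (Polynomial Fq) (RatFunc Fq) P) /
        (algebraMap (Polynomial Fq) (RatFunc Fq) Q)) ^ k *
          algebraMap (Polynomial Fq) (RatFunc Fq) v +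
        ∑ i ∈ Finset.range k,
          (algebraMap (Polynomial Fq) (RatFunc Fq) (s i) /
            algebraMap (Polynomial Fq) (RatFunc Fq) Q) *
          ((algebraMap (Polynomial Fq) (RatFunc Fq) P) /
            (algebraMap (Polynomial Fq) (RatFunc Fq) Q)) ^ i)
    (hw : ∃ b : Polynomial Fq, algebraMap (Polynomial Fq) (RatFunc Fq) b =
      ((algebraMap (Polynomial Fq) (RatFunc Fq) P) /
        (algebraMap (Polynomial Fq) (RatFunc Fq) Q)) ^ k *
          algebraMap (Polynomial Fq) (RatFunc Fq) w +
        ∑ i ∈ Finset.range k,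
          (algebraMap (Polynomial Fq) (RatFunc Fq) (s i) /
            algebraMap (Polynomial Fq) (RatFunc Fq) Q) *
          ((algebraMap (Polynomial Fq) (RatFunc Fq) P) /
            (algebraMap (Polynomial Fq) (RatFunc Fq) Q)) ^ i) :
    Q ^ k ∣ v - w := by
  obtain ⟨a, ha⟩ := hv
  obtain ⟨b, hb⟩ := hw
  refine hcop.pow_dvd_of_algebraMap_eq_div_pow_mul (K := RatFunc Fq) (x := a - b) hQ k ?_
  rw [map_sub, map_sub, ha, hb]
  ring
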